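/- arXiv:1705.07043 — 2 statements merged into one kernel-verified Lean document; each statement's English description precedes it below -/
import Mathlib

section
/- Let γ be the standard Gaussian measure on ℝ, X a real random variable with density f with respect to γ such that f ∈ L^p(γ) for some p > 1, and let m = E[X]. Then the random variable X - m has law absolutely continuous with respect to γ with density g(x) = f(x+m)·exp{-mx - m²/2}, and g ∈ L^q(γ) for every 1 ≤ q < p. -/
/-!
Translating the standard Gaussian `γ` by `m` is the same as tilting it by the density
`exp (m x - m² / 2)` (the one-dimensional Cameron–Martin formula). Pushing `γ.withDensity f`
forward by `x ↦ x - m` therefore gives `γ` with density `f (x + m) exp (-m x - m² / 2)`.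
The same change of variables turns `∫ |g|^q dγ` into
`∫ |f|^q exp ((1 - q) m x + (q - 1) m² / 2) dγ`, which is finite by Hölder's inequality with
exponents `p / q` and `p / (p - q)`, because exponentials of linear functions have Gaussian
moments of every order.
-/

open MeasureTheory ProbabilityTheory Real
open scoped ENNReal NNReal

namespace ProbabilityTheory

variable {μ : ℝ} {v : ℝ≥0}

lemma gaussianPDFReal_mul_exp (hv : v ≠ 0) (b x : ℝ) :
    gaussianPDFReal μ v x * exp (b * (x - μ) - v * b ^ 2 / 2) =
      gaussianPDFReal (μ + v * b) v x := by
  have hv' : (v : ℝ) ≠ 0 := mod_cast hv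
  simp only [gaussianPDFReal, mul_assoc, ← exp_add]
  congr 2
  field_simp
  ring

lemma gaussianReal_withDensity_exp (hv : v ≠ 0) (b : ℝ) :
    (gaussianReal μ v).withDensity
        (fun x => ENNReal.ofReal (exp (b * (x - μ) - v * b ^ 2 / 2))) =
      gaussianReal (μ + v * b) v := by
  rw [gaussianReal_of_var_ne_zero _ hv, gaussianReal_of_var_ne_zero _ hv,
    ← withDensity_mul _ (measurable_gaussianPDF μ v) (by fun_prop)]
  congr 1 with x
  simp only [Pi.mul_apply, gaussianPDF, ← ENNReal.ofReal_mul (gaussianPDFReal_nonneg μ v x),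
    gaussianPDFReal_mul_exp hv]

lemma gaussianReal_map_add_const_eq_withDensity (m : ℝ) :
    (gaussianReal 0 1).map (· + m) =
      (gaussianReal 0 1).withDensity (fun x => ENNReal.ofReal (exp (m * x - m ^ 2 / 2))) := by
  rw [gaussianReal_map_add_const]
  simpa using (gaussianReal_withDensity_exp (μ := 0) (v := 1) one_ne_zero m).symm

lemma quasiMeasurePreserving_add_const_gaussianReal (hv : v ≠ 0) (μ' y : ℝ) :
    Measure.QuasiMeasurePreserving (· + y) (gaussianReal μ v) (gaussianReal μ' v) where
  measurable := measurable_add_const y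
  absolutelyContinuous := by
    rw [gaussianReal_map_add_const]
    exact (gaussianReal_absolutelyContinuous _ hv).trans
      (gaussianReal_absolutelyContinuous' _ hv)

lemma memLp_exp_mul_add_gaussianReal (a c : ℝ) {s : ℝ≥0∞} (hs : s ≠ ∞) :
    MemLp (fun x => exp (a * x + c)) s (gaussianReal μ v) := by
  have hmeas : AEStronglyMeasurable (fun x => exp (a * x + c)) (gaussianReal μ v) := by fun_prop
  rcases eq_or_ne s 0 with rfl | hs0
  · exact memLp_zero_iff_aestronglyMeasurable.2 hmeas
  rw [← integrable_norm_rpow_iff hmeas hs0 hs]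
  have hpow : (fun x => ‖exp (a * x + c)‖ ^ s.toReal) =
      fun x => exp (s.toReal * c) * exp (s.toReal * a * x) := by
    ext x
    rw [norm_of_nonneg (exp_nonneg _), ← exp_mul, ← exp_add]
    ring_nf
  rw [hpow]
  exact (integrable_exp_mul_gaussianReal _).const_mul _

end ProbabilityTheory

namespace MeasureTheory

lemma MeasurableEquiv.map_withDensity {α β : Type*} [MeasurableSpace α] [MeasurableSpace β]
    (e : α ≃ᵐ β) (μ : Measure α) (F : α → ℝ≥0∞) :
    (μ.withDensity F).map e = (μ.map e).withDensity (F ∘ e.symm) := by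
  ext s hs
  rw [e.map_apply, withDensity_apply _ hs, withDensity_apply _ (e.measurable hs), e.restrict_map,
    lintegral_map_equiv]
  simp

lemma MemLp.lintegral_enorm_rpow_mul_lt_top {α E : Type*} [MeasurableSpace α]
    [NormedAddCommGroup E] {μ : Measure α} {f : α → E} {w : α → ℝ} {p q : ℝ}
    (hf : MemLp f (ENNReal.ofReal p) μ) (hw : MemLp w (ENNReal.ofReal (p / (p - q))) μ)
    (hq : 0 < q) (hqp : q < p) :
    ∫⁻ x, ‖f x‖ₑ ^ q * ‖w x‖ₑ ∂μ < ∞ := by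
  have hp : 0 < p := hq.trans hqp
  have hpq : 0 < p - q := sub_pos.2 hqp
  have hHolder : ENNReal.HolderTriple (ENNReal.ofReal (p / (p - q)))
      (ENNReal.ofReal p / ENNReal.ofReal q) 1 := by
    refine ⟨?_⟩
    rw [← ENNReal.ofReal_div_of_pos hq, ← ENNReal.ofReal_inv_of_pos (by positivity),
      ← ENNReal.ofReal_inv_of_pos (by positivity),
      ← ENNReal.ofReal_add (by positivity) (by positivity), inv_one, ← ENNReal.ofReal_one]
    congr 1
    field_simp
    ring
  have hint := memLp_one_iff_integrable.1 ((hf.norm_rpow_div (ENNReal.ofReal q)).mul' hw)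
  refine lt_of_eq_of_lt (lintegral_congr fun x => ?_) hint.hasFiniteIntegral
  rw [ENNReal.toReal_ofReal hq.le, enorm_mul, mul_comm,
    Real.enorm_rpow_of_nonneg (norm_nonneg _) hq.le, enorm_norm]

end MeasureTheory

lemma withDensity_gaussianReal_map_sub_const (F : ℝ → ℝ≥0∞)
    (hF : AEMeasurable F (gaussianReal 0 1)) (m : ℝ) :
    ((gaussianReal 0 1).withDensity F).map (· - m) =
      (gaussianReal 0 1).withDensity
        (fun x => F (x + m) * ENNReal.ofReal (exp (-m * x - m ^ 2 / 2))) := by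
  have hsub : (· - m) = ⇑(MeasurableEquiv.addRight (-m)) := by
    ext x
    simp [sub_eq_add_neg]
  have hF' : AEMeasurable (F ∘ ⇑(MeasurableEquiv.addRight m)) (gaussianReal 0 1) :=
    hF.comp_quasiMeasurePreserving (quasiMeasurePreserving_add_const_gaussianReal one_ne_zero 0 m)
  rw [hsub, MeasurableEquiv.map_withDensity, MeasurableEquiv.symm_addRight, neg_neg,
    MeasurableEquiv.coe_addRight, gaussianReal_map_add_const_eq_withDensity,
    ← withDensity_mul₀ (by fun_prop) hF']
  congr 1 with x
  rw [neg_sq]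
  exact mul_comm _ _

lemma lintegral_enorm_comp_add_mul_exp_rpow_gaussianReal (f : ℝ → ℝ) (m : ℝ) {q : ℝ}
    (hq : 0 ≤ q) :
    ∫⁻ x, ‖f (x + m) * exp (-m * x - m ^ 2 / 2)‖ₑ ^ q ∂(gaussianReal 0 1) =
      ∫⁻ y, ‖f y‖ₑ ^ q * ‖exp ((1 - q) * m * y + (q - 1) * m ^ 2 / 2)‖ₑ
        ∂(gaussianReal 0 1) := by
  calc ∫⁻ x, ‖f (x + m) * exp (-m * x - m ^ 2 / 2)‖ₑ ^ q ∂(gaussianReal 0 1)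
      = ∫⁻ y, ‖f y * exp (-m * (y - m) - m ^ 2 / 2)‖ₑ ^ q
          ∂(gaussianReal 0 1).map (MeasurableEquiv.addRight m) := by
        rw [lintegral_map_equiv]
        simp
    _ = ∫⁻ y, ENNReal.ofReal (exp (m * y - m ^ 2 / 2)) *
          ‖f y * exp (-m * (y - m) - m ^ 2 / 2)‖ₑ ^ q ∂(gaussianReal 0 1) := by
        rw [MeasurableEquiv.coe_addRight, gaussianReal_map_add_const_eq_withDensity,
          lintegral_withDensity_eq_lintegral_mul_non_measurable _ (by fun_prop)
            (ae_of_all _ fun _ => ENNReal.ofReal_lt_top)]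
        rfl
    _ = _ := lintegral_congr fun y => by
        rw [enorm_mul, ENNReal.mul_rpow_of_nonneg _ _ hq, Real.enorm_of_nonneg (exp_nonneg _),
          Real.enorm_of_nonneg (exp_nonneg _), ENNReal.ofReal_rpow_of_nonneg (exp_nonneg _) hq,
          ← exp_mul, mul_left_comm, ← ENNReal.ofReal_mul (exp_nonneg _), ← exp_add]
        congr 3
        ring

theorem centered_density_general
    {Ω : Type*} [MeasurableSpace Ω] (P : Measure Ω)
    (X : Ω → ℝ) (hX : Measurable X) (f : ℝ → ℝ)
    (p : ℝ) (hfLp : MemLp f (ENNReal.ofReal p) (gaussianReal 0 1))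
    (hlaw : Measure.map X P =
      (gaussianReal 0 1).withDensity (fun x => ENNReal.ofReal (f x)))
    (m : ℝ) :
    Measure.map (fun ω => X ω - m) P =
      (gaussianReal 0 1).withDensity
        (fun x => ENNReal.ofReal (f (x + m) * Real.exp (-m * x - m ^ 2 / 2))) ∧
    ∀ q : ℝ, 1 ≤ q → q < p →
      MemLp (fun x => f (x + m) * Real.exp (-m * x - m ^ 2 / 2))
        (ENNReal.ofReal q) (gaussianReal 0 1) := by
  refine ⟨?_, fun q hq hqp => ⟨?_, ?_⟩⟩
  · change Measure.map ((· - m) ∘ X) P = _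
    rw [← Measure.map_map (measurable_sub_const m) hX, hlaw,
      withDensity_gaussianReal_map_sub_const _ hfLp.1.aemeasurable.ennreal_ofReal]
    congr 1 with x
    rw [ENNReal.ofReal_mul' (exp_nonneg _)]
  · exact (hfLp.1.comp_quasiMeasurePreserving
      (quasiMeasurePreserving_add_const_gaussianReal one_ne_zero 0 m)).mul (by fun_prop)
  · rw [eLpNorm_lt_top_iff_lintegral_rpow_enorm_lt_top (ENNReal.ofReal_pos.2 (by linarith)).ne'
      ENNReal.ofReal_ne_top, ENNReal.toReal_ofReal (by linarith),
      lintegral_enorm_comp_add_mul_exp_rpow_gaussianReal f m (by linarith)]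
    exact hfLp.lintegral_enorm_rpow_mul_lt_top
      (memLp_exp_mul_add_gaussianReal _ _ ENNReal.ofReal_ne_top) (by linarith) hqp

/-- if `X` has γ-density `f ∈ L^p(γ)` with `p > 1` and mean `m`, then
`X - m` has γ-density `g(x) = f(x+m) exp (-mx - m²/2)`, and `g ∈ L^q(γ)` for all
`1 ≤ q < p`. -/
theorem centered_density
    {Ω : Type*} [MeasurableSpace Ω] (P : Measure Ω) [IsProbabilityMeasure P]
    (X : Ω → ℝ) (hX : Measurable X) (f : ℝ → ℝ) (hf0 : ∀ x, 0 ≤ f x)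
    (p : ℝ) (hp : 1 < p) (hfLp : MemLp f (ENNReal.ofReal p) (gaussianReal 0 1))
    (hlaw : Measure.map X P =
      (gaussianReal 0 1).withDensity (fun x => ENNReal.ofReal (f x)))
    (m : ℝ) (hm : m = ∫ ω, X ω ∂P) :
    Measure.map (fun ω => X ω - m) P =
      (gaussianReal 0 1).withDensity
        (fun x => ENNReal.ofReal (f (x + m) * Real.exp (-m * x - m ^ 2 / 2))) ∧
    ∀ q : ℝ, 1 ≤ q → q < p →
      MemLp (fun x => f (x + m) * Real.exp (-m * x - m ^ 2 / 2))
        (ENNReal.ofReal q) (gaussianReal 0 1) :=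
  centered_density_general P X hX f p hfLp hlaw m
end

section
/- Hölder-type bound for Wick-multiplied densities (one-dimensional version of Lemma 3.5): for every p > 1 and 1 ≤ q < p there exists C = C(p,q) > 0 such that for all f ∈ L^p(γ) with f ≥ 0 and all g with |g| < C, the function x ↦ ∫_ℝ f(x − λg)e^{λgx − λ²g²/2} dγ(λ) belongs to L^q(γ). -/
/-!
Write `E a x = exp (a x - a² / 2)`. The measure `E a · γ` is the Gaussian
centred at `a`, so `∫ u (x - a) E a x dγ(x) = ∫ u dγ` (Cameron–Martin). Jensen's inequality for the
weight `E (λg) x dγ(λ)`, whose mass is at most `K e^{g² x²}`, bounds the `q`-th power of the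
integral at `x` by `K^{q-1} e^{(q-1) g² x²} ∫ |f|^q (x - λg) E (λg) x dγ(λ)`. After exchanging the
integrals, Cameron–Martin in `x` for each `λ` leaves `∫∫ |f|^q (y) e^{c (y + λg)²} dγ(y) dγ(λ)` with
`c = (q - 1) g²`, which splits by `(y + b)² ≤ 2y² + 2b²`. Hölder with exponent `p / q` then reduces
everything to Gaussian integrals `∫ e^{c' y²} dγ`, finite for `c' < 1/2`; this is what the
smallness of `g` buys.
-/

open MeasureTheory ProbabilityTheory Real
open scoped ENNReal

local notation "γ" => gaussianReal 0 1

lemma ofReal_exp_rpow (t r : ℝ) : ENNReal.ofReal (exp t) ^ r = ENNReal.ofReal (exp (r * t)) := by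
  rw [ENNReal.ofReal_rpow_of_pos (exp_pos t), ← exp_mul, mul_comm]

section Holder

variable {α : Type*} [MeasurableSpace α] {μ : Measure α} {u w : α → ℝ≥0∞}

lemma lintegral_mul_rpow_le (hu : AEMeasurable u μ) (hw : AEMeasurable w μ) {q : ℝ}
    (hq : 1 ≤ q) :
    (∫⁻ a, u a * w a ∂μ) ^ q ≤ (∫⁻ a, u a ^ q * w a ∂μ) * (∫⁻ a, w a ∂μ) ^ (q - 1) := by
  have hq0 : 0 < q := zero_lt_one.trans_le hq
  have hsum : 1 / q + (1 - 1 / q) = 1 := by ring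
  have hconj : (0 : ℝ) ≤ 1 - 1 / q := sub_nonneg.2 ((div_le_one hq0).2 hq)
  have hsplit : ∀ a, u a * w a = (u a ^ q * w a) ^ (1 / q) * w a ^ (1 - 1 / q) := fun a => by
    rw [ENNReal.mul_rpow_of_nonneg _ _ (by positivity), ← ENNReal.rpow_mul,
      mul_one_div_cancel hq0.ne', ENNReal.rpow_one, mul_assoc,
      ← ENNReal.rpow_add_of_nonneg _ _ (by positivity) hconj, hsum, ENNReal.rpow_one]
  have holder := ENNReal.lintegral_mul_norm_pow_le ((hu.pow_const q).mul hw) hw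
    (by positivity) hconj hsum
  calc (∫⁻ a, u a * w a ∂μ) ^ q
      ≤ ((∫⁻ a, u a ^ q * w a ∂μ) ^ (1 / q) * (∫⁻ a, w a ∂μ) ^ (1 - 1 / q)) ^ q :=
        ENNReal.rpow_le_rpow ((lintegral_congr hsplit).trans_le holder) hq0.le
    _ = (∫⁻ a, u a ^ q * w a ∂μ) * (∫⁻ a, w a ∂μ) ^ (q - 1) := by
        rw [ENNReal.mul_rpow_of_nonneg _ _ hq0.le, ← ENNReal.rpow_mul, ← ENNReal.rpow_mul,
          one_div_mul_cancel hq0.ne', ENNReal.rpow_one]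
        congr 2
        field_simp

lemma lintegral_rpow_mul_le (hu : AEMeasurable u μ) (hw : AEMeasurable w μ) {p q : ℝ}
    (hq : 0 ≤ q) (hqp : q < p) :
    ∫⁻ a, u a ^ q * w a ∂μ
      ≤ (∫⁻ a, u a ^ p ∂μ) ^ (q / p) * (∫⁻ a, w a ^ (p / (p - q)) ∂μ) ^ ((p - q) / p) := by
  have hp : 0 < p := hq.trans_lt hqp
  have hpq : 0 < p - q := sub_pos.2 hqp
  have hsplit : ∀ a, u a ^ q * w a = (u a ^ p) ^ (q / p) * (w a ^ (p / (p - q))) ^ ((p - q) / p) :=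
    fun a => by
      rw [← ENNReal.rpow_mul, ← ENNReal.rpow_mul, mul_div_cancel₀ _ hp.ne',
        div_mul_div_cancel₀ hpq.ne', div_self hp.ne', ENNReal.rpow_one]
  rw [lintegral_congr hsplit]
  exact ENNReal.lintegral_mul_norm_pow_le (hu.pow_const p) (hw.pow_const _) (by positivity)
    (by positivity) (by field_simp; ring)

end Holder

noncomputable def wickExp (a x : ℝ) : ℝ := exp (a * x - a ^ 2 / 2)

lemma wickExp_pos (a x : ℝ) : 0 < wickExp a x := exp_pos _

@[fun_prop]
lemma Measurable.wickExp {α : Type*} [MeasurableSpace α] {f g : α → ℝ} (hf : Measurable f)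
    (hg : Measurable g) : Measurable fun a => wickExp (f a) (g a) := by
  unfold _root_.wickExp; fun_prop

lemma gaussianPDF_mul_wickExp (a x : ℝ) :
    gaussianPDF 0 1 x * ENNReal.ofReal (wickExp a x) = gaussianPDF a 1 x := by
  rw [gaussianPDF, gaussianPDF, ← ENNReal.ofReal_mul (gaussianPDFReal_nonneg _ _ _)]
  simp only [gaussianPDFReal, wickExp, NNReal.coe_one, mul_one, mul_assoc, ← exp_add]
  congr 3
  ring

lemma withDensity_wickExp_gaussianReal (a : ℝ) :
    (γ).withDensity (fun x => ENNReal.ofReal (wickExp a x)) = gaussianReal a 1 := by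
  rw [gaussianReal_of_var_ne_zero _ one_ne_zero, gaussianReal_of_var_ne_zero _ one_ne_zero,
    ← withDensity_mul _ (measurable_gaussianPDF 0 1) (by fun_prop)]
  exact congrArg _ (funext (gaussianPDF_mul_wickExp a))

lemma lintegral_comp_sub_mul_wickExp {u : ℝ → ℝ≥0∞} (hu : Measurable u) (a : ℝ) :
    ∫⁻ x, u (x - a) * ENNReal.ofReal (wickExp a x) ∂γ = ∫⁻ y, u y ∂γ := by
  calc ∫⁻ x, u (x - a) * ENNReal.ofReal (wickExp a x) ∂γ
      = ∫⁻ x, u (x - a) ∂(gaussianReal a 1) := by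
        rw [← withDensity_wickExp_gaussianReal a, lintegral_withDensity_eq_lintegral_mul _
          (by fun_prop) (by fun_prop)]
        simp only [Pi.mul_apply, mul_comm]
    _ = ∫⁻ y, u y ∂γ := by
        rw [← lintegral_map hu (measurable_sub_const a), gaussianReal_map_sub_const, sub_self]

lemma lintegral_ofReal_exp_mul_sq_lt_top {c : ℝ} (hc : c < 1 / 2) :
    ∫⁻ x, ENNReal.ofReal (exp (c * x ^ 2)) ∂γ < ∞ := by
  rw [gaussianReal_of_var_ne_zero _ one_ne_zero,
    lintegral_withDensity_eq_lintegral_mul _ (measurable_gaussianPDF 0 1) (by fun_prop)]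
  have hint : Integrable (fun x => (√(2 * π))⁻¹ * exp (-(1 / 2 - c) * x ^ 2)) :=
    (integrable_exp_neg_mul_sq (by linarith)).const_mul _
  refine lt_of_eq_of_lt (lintegral_congr fun x => ?_) hint.lintegral_lt_top
  rw [Pi.mul_apply, gaussianPDF, ← ENNReal.ofReal_mul (gaussianPDFReal_nonneg _ _ _)]
  simp only [gaussianPDFReal, NNReal.coe_one, mul_one, sub_zero, mul_assoc, ← exp_add]
  congr 3
  ring

lemma gaussianReal_map_const_sub_mul_absolutelyContinuous (x : ℝ) {g : ℝ} (hg : g ≠ 0) :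
    (γ).map (fun l => x - l * g) ≪ γ := by
  have hcomp : (fun l => x - l * g) = (x - ·) ∘ (· * g) := rfl
  rw [hcomp, ← Measure.map_map (by fun_prop) (by fun_prop), gaussianReal_map_mul_const,
    gaussianReal_map_const_sub]
  refine (gaussianReal_absolutelyContinuous _ ?_).trans
    (gaussianReal_absolutelyContinuous' 0 one_ne_zero)
  simpa [← NNReal.coe_inj] using hg

lemma lintegral_ofReal_wickExp_le (g x : ℝ) :
    ∫⁻ l, ENNReal.ofReal (wickExp (l * g) x) ∂γ
      ≤ ENNReal.ofReal (exp (g ^ 2 * x ^ 2)) * ∫⁻ l, ENNReal.ofReal (exp (1 / 4 * l ^ 2)) ∂γ := by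
  rw [← lintegral_const_mul' _ _ ENNReal.ofReal_ne_top]
  refine lintegral_mono fun l => ?_
  rw [← ENNReal.ofReal_mul (exp_pos _).le, ← exp_add]
  refine ENNReal.ofReal_le_ofReal (exp_le_exp.2 ?_)
  nlinarith [sq_nonneg (l / 2 - g * x), sq_nonneg (l * g)]

lemma lintegral_comp_sub_mul_wickExp_rpow_le {u : ℝ → ℝ≥0∞} (hu : Measurable u) {q : ℝ}
    (hq : 1 ≤ q) (g x : ℝ) :
    (∫⁻ l, u (x - l * g) * ENNReal.ofReal (wickExp (l * g) x) ∂γ) ^ q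
      ≤ (∫⁻ l, ENNReal.ofReal (exp (1 / 4 * l ^ 2)) ∂γ) ^ (q - 1)
        * (ENNReal.ofReal (exp ((q - 1) * g ^ 2 * x ^ 2))
          * ∫⁻ l, u (x - l * g) ^ q * ENNReal.ofReal (wickExp (l * g) x) ∂γ) := by
  have hq1 : 0 ≤ q - 1 := sub_nonneg.2 hq
  calc (∫⁻ l, u (x - l * g) * ENNReal.ofReal (wickExp (l * g) x) ∂γ) ^ q
      ≤ (∫⁻ l, u (x - l * g) ^ q * ENNReal.ofReal (wickExp (l * g) x) ∂γ)
        * (∫⁻ l, ENNReal.ofReal (wickExp (l * g) x) ∂γ) ^ (q - 1) :=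
        lintegral_mul_rpow_le (by fun_prop) (by fun_prop) hq
    _ ≤ (∫⁻ l, u (x - l * g) ^ q * ENNReal.ofReal (wickExp (l * g) x) ∂γ)
        * (ENNReal.ofReal (exp (g ^ 2 * x ^ 2))
          * ∫⁻ l, ENNReal.ofReal (exp (1 / 4 * l ^ 2)) ∂γ) ^ (q - 1) := by
        gcongr
        exact lintegral_ofReal_wickExp_le g x
    _ = _ := by
        rw [ENNReal.mul_rpow_of_nonneg _ _ hq1, ofReal_exp_rpow, ← mul_assoc (q - 1)]
        ring

lemma lintegral_mul_lintegral_comp_sub_mul_wickExp {v : ℝ → ℝ≥0∞} (hv : Measurable v)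
    (c g : ℝ) :
    ∫⁻ x, ENNReal.ofReal (exp (c * x ^ 2))
        * ∫⁻ l, v (x - l * g) * ENNReal.ofReal (wickExp (l * g) x) ∂γ ∂γ
      = ∫⁻ l, ∫⁻ y, v y * ENNReal.ofReal (exp (c * (y + l * g) ^ 2)) ∂γ ∂γ := by
  simp_rw [← lintegral_const_mul' _ _ ENNReal.ofReal_ne_top]
  rw [lintegral_lintegral_swap (by fun_prop)]
  refine lintegral_congr fun l => ?_
  refine (lintegral_congr fun x => ?_).trans (lintegral_comp_sub_mul_wickExp
    (u := fun y => v y * ENNReal.ofReal (exp (c * (y + l * g) ^ 2))) (by fun_prop) (l * g))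
  simp only [sub_add_cancel]
  ring

lemma lintegral_lintegral_mul_exp_sq_add_le {μ ν : Measure ℝ} {v : ℝ → ℝ≥0∞} {c : ℝ}
    (hc : 0 ≤ c) (g : ℝ) :
    ∫⁻ l, ∫⁻ y, v y * ENNReal.ofReal (exp (c * (y + l * g) ^ 2)) ∂μ ∂ν
      ≤ (∫⁻ y, v y * ENNReal.ofReal (exp (2 * c * y ^ 2)) ∂μ)
        * ∫⁻ l, ENNReal.ofReal (exp (2 * c * g ^ 2 * l ^ 2)) ∂ν := by
  have hsq : ∀ y l : ℝ, ENNReal.ofReal (exp (c * (y + l * g) ^ 2))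
      ≤ ENNReal.ofReal (exp (2 * c * y ^ 2)) * ENNReal.ofReal (exp (2 * c * g ^ 2 * l ^ 2)) := by
    intro y l
    rw [← ENNReal.ofReal_mul (exp_pos _).le, ← exp_add]
    refine ENNReal.ofReal_le_ofReal (exp_le_exp.2 ?_)
    nlinarith [mul_nonneg hc (sq_nonneg (y - l * g))]
  rw [← lintegral_const_mul _ (by fun_prop)]
  refine lintegral_mono fun l => ?_
  rw [← lintegral_mul_const' _ _ ENNReal.ofReal_ne_top]
  refine lintegral_mono fun y => ?_
  rw [mul_assoc]
  gcongr
  exact hsq y l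

lemma lintegral_rpow_mul_exp_sq_lt_top {u : ℝ → ℝ≥0∞} (hu : Measurable u) {p q c : ℝ}
    (hq : 0 ≤ q) (hqp : q < p) (hup : ∫⁻ y, u y ^ p ∂γ < ∞) (hc : p / (p - q) * c < 1 / 2) :
    ∫⁻ y, u y ^ q * ENNReal.ofReal (exp (c * y ^ 2)) ∂γ < ∞ := by
  have hp : 0 ≤ p := hq.trans hqp.le
  have hpq : 0 ≤ (p - q) / p := div_nonneg (sub_nonneg.2 hqp.le) hp
  refine (lintegral_rpow_mul_le hu.aemeasurable (by fun_prop) hq hqp).trans_lt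
    (ENNReal.mul_lt_top (ENNReal.rpow_lt_top_of_nonneg (div_nonneg hq hp) hup.ne)
      (ENNReal.rpow_lt_top_of_nonneg hpq ?_))
  simp_rw [ofReal_exp_rpow, ← mul_assoc]
  exact (lintegral_ofReal_exp_mul_sq_lt_top hc).ne

theorem lintegral_lintegral_comp_sub_mul_wickExp_rpow_lt_top {u : ℝ → ℝ≥0∞} (hu : Measurable u)
    {p q g : ℝ} (hq : 1 ≤ q) (hqp : q < p) (hup : ∫⁻ y, u y ^ p ∂γ < ∞)
    (hg : 4 * p * q * g ^ 2 < p - q) :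
    ∫⁻ x, (∫⁻ l, u (x - l * g) * ENNReal.ofReal (wickExp (l * g) x) ∂γ) ^ q ∂γ < ∞ := by
  have hpq : 0 < p - q := sub_pos.2 hqp
  have hp : 0 < p := by linarith
  have hqg : 4 * q * g ^ 2 < 1 := lt_of_mul_lt_mul_left (by nlinarith) hp.le
  set c := (q - 1) * g ^ 2
  have hc : 0 ≤ c := mul_nonneg (sub_nonneg.2 hq) (sq_nonneg g)
  have hcp : p / (p - q) * (2 * c) < 1 / 2 := by
    rw [div_mul_eq_mul_div, div_lt_iff₀ hpq]
    nlinarith [mul_nonneg hp.le (sq_nonneg g)]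
  have hcg : 2 * c * g ^ 2 < 1 / 2 := by nlinarith [sq_nonneg g]
  set K := ∫⁻ l, ENNReal.ofReal (exp (1 / 4 * l ^ 2)) ∂γ
  have hK : K < ∞ := lintegral_ofReal_exp_mul_sq_lt_top (by norm_num)
  calc ∫⁻ x, (∫⁻ l, u (x - l * g) * ENNReal.ofReal (wickExp (l * g) x) ∂γ) ^ q ∂γ
      ≤ ∫⁻ x, K ^ (q - 1) * (ENNReal.ofReal (exp (c * x ^ 2))
          * ∫⁻ l, u (x - l * g) ^ q * ENNReal.ofReal (wickExp (l * g) x) ∂γ) ∂γ :=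
        lintegral_mono fun x => lintegral_comp_sub_mul_wickExp_rpow_le hu hq g x
    _ = K ^ (q - 1) * ∫⁻ l, ∫⁻ y, u y ^ q * ENNReal.ofReal (exp (c * (y + l * g) ^ 2)) ∂γ ∂γ := by
        rw [lintegral_const_mul' _ _ (ENNReal.rpow_lt_top_of_nonneg (by linarith) hK.ne).ne]
        exact congrArg _
          (lintegral_mul_lintegral_comp_sub_mul_wickExp (v := fun y => u y ^ q) (by fun_prop) c g)
    _ ≤ K ^ (q - 1) * ((∫⁻ y, u y ^ q * ENNReal.ofReal (exp (2 * c * y ^ 2)) ∂γ)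
          * ∫⁻ l, ENNReal.ofReal (exp (2 * c * g ^ 2 * l ^ 2)) ∂γ) := by
        gcongr
        exact lintegral_lintegral_mul_exp_sq_add_le hc g
    _ < ∞ := ENNReal.mul_lt_top (ENNReal.rpow_lt_top_of_nonneg (by linarith) hK.ne)
        (ENNReal.mul_lt_top (lintegral_rpow_mul_exp_sq_lt_top hu (by linarith) hqp hup hcp)
          (lintegral_ofReal_exp_mul_sq_lt_top hcg))

theorem memLp_integral_comp_sub_mul_wickExp {f : ℝ → ℝ} {p q g : ℝ} (hq : 1 ≤ q) (hqp : q < p)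
    (hf : MemLp f (ENNReal.ofReal p) γ) (hg0 : g ≠ 0) (hg : 4 * p * q * g ^ 2 < p - q) :
    MemLp (fun x => ∫ l, f (x - l * g) * wickExp (l * g) x ∂γ) (ENNReal.ofReal q) γ := by
  have hp : 0 < p := by linarith
  set f₀ := hf.1.mk f
  have hf₀ : Measurable f₀ := hf.1.stronglyMeasurable_mk.measurable
  have hF : (fun x => ∫ l, f (x - l * g) * wickExp (l * g) x ∂γ)
      = fun x => ∫ l, f₀ (x - l * g) * wickExp (l * g) x ∂γ := by
    funext x
    have hae : (fun l => f (x - l * g)) =ᵐ[γ] fun l => f₀ (x - l * g) :=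
      ae_eq_comp (by fun_prop)
        ((gaussianReal_map_const_sub_mul_absolutelyContinuous x hg0).ae_eq hf.1.ae_eq_mk)
    refine integral_congr_ae ?_
    filter_upwards [hae] with l hl
    rw [hl]
  rw [hF]
  refine ⟨(StronglyMeasurable.integral_prod_right
    (f := fun x l => f₀ (x - l * g) * wickExp (l * g) x) (by fun_prop)).aestronglyMeasurable, ?_⟩
  rw [eLpNorm_lt_top_iff_lintegral_rpow_enorm_lt_top (ENNReal.ofReal_pos.2 (by linarith)).ne'
    ENNReal.ofReal_ne_top, ENNReal.toReal_ofReal (by linarith)]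
  have hf₀p : ∫⁻ y, ‖f₀ y‖ₑ ^ p ∂γ < ∞ := by
    simpa [ENNReal.toReal_ofReal hp.le] using lintegral_rpow_enorm_lt_top_of_eLpNorm_lt_top
      (ENNReal.ofReal_pos.2 hp).ne' ENNReal.ofReal_ne_top ((hf.ae_eq hf.1.ae_eq_mk).eLpNorm_lt_top)
  refine lt_of_le_of_lt (lintegral_mono fun x => ENNReal.rpow_le_rpow ?_ (by linarith))
    (lintegral_lintegral_comp_sub_mul_wickExp_rpow_lt_top (by fun_prop) hq hqp hf₀p hg)
  refine (enorm_integral_le_lintegral_enorm _).trans_eq (lintegral_congr fun l => ?_)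
  rw [enorm_mul, Real.enorm_of_nonneg (wickExp_pos _ _).le]

theorem wick_multiplied_density_memLq_general
    (p q : ℝ) (hq1 : 1 ≤ q) (hqp : q < p) :
    ∃ C > (0 : ℝ), ∀ f : ℝ → ℝ, (∀ x, 0 ≤ f x) →
      MemLp f (ENNReal.ofReal p) (gaussianReal 0 1) →
      ∀ g : ℝ, |g| < C →
        MemLp (fun x => ∫ l, f (x - l * g) * Real.exp (l * g * x - l ^ 2 * g ^ 2 / 2)
            ∂(gaussianReal 0 1))
          (ENNReal.ofReal q) (gaussianReal 0 1) := by
  have hq : 0 < q := by linarith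
  have hp : 0 < p := by linarith
  refine ⟨√((p - q) / (4 * p * q)), Real.sqrt_pos.2 (div_pos (by linarith) (by positivity)),
    fun f _ hf g hg => ?_⟩
  rcases eq_or_ne g 0 with rfl | hg0
  · simpa using hf.mono_exponent (ENNReal.ofReal_le_ofReal hqp.le)
  · have hsmall : 4 * p * q * g ^ 2 < p - q := by
      rw [Real.lt_sqrt (abs_nonneg g), sq_abs, lt_div_iff₀ (by positivity)] at hg
      linarith
    simpa only [wickExp, mul_pow] using memLp_integral_comp_sub_mul_wickExp hq1 hqp hf hg0 hsmall

/-- Hölder-type bound for Wick-multiplied densities: for `p > 1` and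
`1 ≤ q < p` there exists `C > 0` such that for every nonnegative `f ∈ L^p(γ)` and
every `g` with `|g| < C`, the function
`x ↦ ∫ f(x - λg) exp (λgx - λ²g²/2) dγ(λ)` belongs to `L^q(γ)`. -/
theorem wick_multiplied_density_memLq
    (p q : ℝ) (hp : 1 < p) (hq1 : 1 ≤ q) (hqp : q < p) :
    ∃ C > (0 : ℝ), ∀ f : ℝ → ℝ, (∀ x, 0 ≤ f x) →
      MemLp f (ENNReal.ofReal p) (gaussianReal 0 1) →
      ∀ g : ℝ, |g| < C →
        MemLp (fun x => ∫ l, f (x - l * g) * Real.exp (l * g * x - l ^ 2 * g ^ 2 / 2)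
            ∂(gaussianReal 0 1))
          (ENNReal.ofReal q) (gaussianReal 0 1) :=
  wick_multiplied_density_memLq_general p q hq1 hqp
end
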